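/- arXiv:1306.0720 — 3 statements merged into one kernel-verified Lean document; each statement's English description precedes it below -/
import Mathlib

section
/- Let T be a row contraction on H with n-th defect space D_n (the closed range of I - Ψ_T^n(I)). Then the row operator T maps D_n^d into D_{n+1}; that is, for any x_1,...,x_d ∈ D_n, Σ_{i=1}^d T_i x_i ∈ D_{n+1}. -/
open ContinuousLinearMap

/-- The completely positive map `Ψ_T(X) = ∑ i, T i X (T i)*` associated to a `d`-tuple. -/
noncomputable def psiMap {H : Type*} [NormedAddCommGroup H] [InnerProductSpace ℂ H]
    [CompleteSpace H] {d : ℕ} (T : Fin d → H →L[ℂ] H) (X : H →L[ℂ] H) : H →L[ℂ] H :=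
  ∑ i, T i ∘L X ∘L adjoint (T i)

/-- The `n`-th defect space: the closure of the range of `I - Ψ_T^n(I)`. -/
noncomputable def defectSpace {H : Type*} [NormedAddCommGroup H] [InnerProductSpace ℂ H]
    [CompleteSpace H] {d : ℕ} (T : Fin d → H →L[ℂ] H) (n : ℕ) : Submodule ℂ H :=
  (LinearMap.range ((1 - (psiMap T)^[n] 1 : H →L[ℂ] H) : H →ₗ[ℂ] H)).topologicalClosure

/-!
With `E_n = I - Ψ_T^n(I)` one has `E_{n+1} = E_1 + Ψ_T(E_n)`, a sum of positive operators, and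
`D_n = (ker E_n)ᗮ`. If `E_{n+1} y = 0`, then `0 = ⟪E_1 y, y⟫ + ∑ i, ⟪E_n (T i† y), T i† y⟫` forces
`E_n (T i† y) = 0` for every `i`, hence `⟪y, T i x_i⟫ = ⟪T i† y, x_i⟫ = 0` whenever `x_i ∈ D_n`.
-/

open scoped ComplexOrder InnerProductSpace

section

variable {H : Type*} [NormedAddCommGroup H] [InnerProductSpace ℂ H] [CompleteSpace H]

namespace ContinuousLinearMap

/-- Writing `A = B† B`, the form `⟪A x, x⟫ = ‖B x‖²` vanishes only if `B x = 0`. -/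
theorem IsPositive.apply_eq_zero_of_inner_eq_zero {A : H →L[ℂ] H} (hA : A.IsPositive) {x : H}
    (hx : ⟪A x, x⟫_ℂ = 0) : A x = 0 := by
  obtain ⟨B, rfl⟩ :=
    CStarAlgebra.nonneg_iff_eq_star_mul_self.mp ((nonneg_iff_isPositive A).mpr hA)
  rw [mul_apply_eq_comp, star_eq_adjoint, adjoint_inner_left, inner_self_eq_zero] at hx
  rw [mul_apply_eq_comp, hx, map_zero]

theorem IsSelfAdjoint.topologicalClosure_range_eq_orthogonal_ker {A : H →L[ℂ] H}
    (hA : IsSelfAdjoint A) :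
    (LinearMap.range (A : H →ₗ[ℂ] H)).topologicalClosure = A.kerᗮ := by
  rw [orthogonal_ker, ← star_eq_adjoint, hA.star_eq]

end ContinuousLinearMap

section psiMap

variable {d : ℕ} (T : Fin d → H →L[ℂ] H)

theorem psiMap_sub (X Y : H →L[ℂ] H) : psiMap T (X - Y) = psiMap T X - psiMap T Y := by
  simp only [psiMap, comp_sub, sub_comp, Finset.sum_sub_distrib]

theorem inner_psiMap_apply_self (X : H →L[ℂ] H) (y : H) :
    ⟪psiMap T X y, y⟫_ℂ = ∑ i, ⟪X (adjoint (T i) y), adjoint (T i) y⟫_ℂ := by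
  simp only [psiMap, sum_apply, comp_apply, sum_inner, adjoint_inner_right]

theorem IsSelfAdjoint.psiMap {X : H →L[ℂ] H} (hX : IsSelfAdjoint X) :
    IsSelfAdjoint (psiMap T X) :=
  isSelfAdjoint_sum _ fun i _ => hX.conjugate (T i)

theorem ContinuousLinearMap.IsPositive.psiMap {X : H →L[ℂ] H} (hX : X.IsPositive) :
    (psiMap T X).IsPositive :=
  isPositive_sum _ fun i _ => hX.conj_adjoint (T i)

theorem one_sub_psiMap_iterate_succ (n : ℕ) :
    (1 - (psiMap T)^[n + 1] 1 : H →L[ℂ] H) =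
      (1 - psiMap T 1) + psiMap T (1 - (psiMap T)^[n] 1) := by
  rw [Function.iterate_succ_apply', psiMap_sub]
  abel

theorem isSelfAdjoint_one_sub_psiMap_iterate (n : ℕ) :
    IsSelfAdjoint (1 - (psiMap T)^[n] 1 : H →L[ℂ] H) :=
  .sub (.one _) (Function.Iterate.rec _ (.one _) (fun _ h => h.psiMap T) n)

theorem isPositive_one_sub_psiMap_iterate (hT : (1 - psiMap T 1).IsPositive) (n : ℕ) :
    (1 - (psiMap T)^[n] 1 : H →L[ℂ] H).IsPositive := by
  induction n with
  | zero => simp [isPositive_zero]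
  | succ n ih => rw [one_sub_psiMap_iterate_succ]; exact hT.add (ih.psiMap T)

theorem defectSpace_eq_orthogonal_ker (n : ℕ) :
    defectSpace T n = (1 - (psiMap T)^[n] 1 : H →L[ℂ] H).kerᗮ :=
  (isSelfAdjoint_one_sub_psiMap_iterate T n).topologicalClosure_range_eq_orthogonal_ker

theorem apply_adjoint_eq_zero_of_add_psiMap_apply_eq_zero {A B : H →L[ℂ] H} (hA : A.IsPositive)
    (hB : B.IsPositive) {y : H} (hy : (A + psiMap T B) y = 0) (i : Fin d) :
    B (adjoint (T i) y) = 0 := by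
  have hform : ⟪A y, y⟫_ℂ + ∑ j, ⟪B (adjoint (T j) y), adjoint (T j) y⟫_ℂ = 0 := by
    rw [← inner_psiMap_apply_self, ← inner_add_left, ← add_apply, hy, inner_zero_left]
  have hterms : ∀ j ∈ Finset.univ, 0 ≤ ⟪B (adjoint (T j) y), adjoint (T j) y⟫_ℂ :=
    fun j _ => hB.inner_nonneg_left _
  rw [add_eq_zero_iff_of_nonneg (hA.inner_nonneg_left y) (Finset.sum_nonneg hterms),
    Finset.sum_eq_zero_iff_of_nonneg hterms] at hform
  exact hB.apply_eq_zero_of_inner_eq_zero (hform.2 i (Finset.mem_univ i))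

end psiMap

end

/-- The row operator `T` maps `D_n^d` into `D_{n+1}`: for `x_1, …, x_d ∈ D_n`
one has `∑ Tᵢ xᵢ ∈ D_{n+1}`. -/
theorem stmt6 {H : Type*} [NormedAddCommGroup H] [InnerProductSpace ℂ H] [CompleteSpace H]
    {d : ℕ} (T : Fin d → H →L[ℂ] H)
    (hT : (1 - psiMap T 1).IsPositive) :
    ∀ (n : ℕ) (x : Fin d → H), (∀ i, x i ∈ defectSpace T n) →
      (∑ i, T i (x i)) ∈ defectSpace T (n + 1) := by
  intro n x hx
  simp only [defectSpace_eq_orthogonal_ker, Submodule.mem_orthogonal, LinearMap.mem_ker] at hx ⊢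
  intro y hy
  rw [one_sub_psiMap_iterate_succ] at hy
  rw [inner_sum]
  refine Finset.sum_eq_zero fun i _ => ?_
  rw [← adjoint_inner_left]
  exact hx i _ (apply_adjoint_eq_zero_of_add_psiMap_apply_eq_zero T hT
    (isPositive_one_sub_psiMap_iterate T hT n) hy i)
end

section
/- Let T be a row contraction with Δ_T = 1 and D_1 = ℂξ on an infinite-dimensional Hilbert space. Then Δ_T^n attains the maximal value 1 + d + ... + d^{n-1} for all n ≤ m if and only if there is no nonzero noncommutative polynomial P of degree less than m with P(T)ξ = 0. -/
/-!
As `I - Ψ_T(I)` is self-adjoint with closed range `ℂξ`, it equals `c |ξ⟩⟨ξ|` with `c ≠ 0`.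
Telescoping, `I - Ψ_T^n(I) = ∑_{k<n} Ψ_T^k(I - Ψ_T(I)) = c ∑_{|w|<n} |T_w ξ⟩⟨T_w ξ|`, and the
closed range of a finite sum `∑ |v_j⟩⟨v_j|` is the span of the `v_j` (its kernel is their
orthogonal complement). So `Δ_T^n` is maximal exactly when the `T_w ξ` with `|w| < n` are
linearly independent, and independence for `n = m` gives it for every `n ≤ m`.
-/

open ContinuousLinearMap

/-- The word operator `T_{w(0)} T_{w(1)} ⋯ T_{w(k-1)}` (the empty word gives the identity). -/
noncomputable def wordOp {H : Type*} [NormedAddCommGroup H] [InnerProductSpace ℂ H]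
    [CompleteSpace H] {d : ℕ} (T : Fin d → H →L[ℂ] H) {k : ℕ} (w : Fin k → Fin d) :
    H →L[ℂ] H :=
  (List.ofFn fun j => T (w j)).prod

open InnerProductSpace

lemma rank_span_range_eq_card_iff {K V ι : Type*} [DivisionRing K] [AddCommGroup V] [Module K V]
    [Fintype ι] {v : ι → V} :
    Module.rank K (Submodule.span K (Set.range v)) = Fintype.card ι ↔ LinearIndependent K v := by
  have := FiniteDimensional.span_of_finite K (Set.finite_range v)
  rw [linearIndependent_iff_card_eq_finrank_span, Set.finrank, ← Module.finrank_eq_rank,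
    Nat.cast_inj, eq_comm]

section RankOne

variable {𝕜 E : Type*} [RCLike 𝕜] [NormedAddCommGroup E] [InnerProductSpace 𝕜 E]
  {ι : Type*}

lemma mem_orthogonal_span_range_iff {v : ι → E} {x : E} :
    x ∈ (Submodule.span 𝕜 (Set.range v))ᗮ ↔ ∀ j, inner 𝕜 (v j) x = 0 := by
  rw [← Submodule.span_singleton_le_iff_mem, ← Submodule.isOrtho_iff_le, Submodule.isOrtho_comm,
    Submodule.isOrtho_span]
  simp

variable [Fintype ι]

lemma re_inner_sum_rankOne_self_apply (v : ι → E) (x : E) :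
    RCLike.re (inner 𝕜 x ((∑ j, rankOne 𝕜 (v j) (v j)) x)) = ∑ j, ‖inner 𝕜 (v j) x‖ ^ 2 := by
  rw [sum_apply, inner_sum, map_sum]
  refine Finset.sum_congr rfl fun j _ => ?_
  rw [rankOne_apply, inner_smul_right, ← inner_conj_symm x, RCLike.mul_conj]
  norm_cast

lemma ker_sum_rankOne_self (v : ι → E) :
    (∑ j, rankOne 𝕜 (v j) (v j)).ker = (Submodule.span 𝕜 (Set.range v))ᗮ := by
  ext x
  rw [mem_orthogonal_span_range_iff, LinearMap.mem_ker]
  constructor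
  · intro hx j
    have h := re_inner_sum_rankOne_self_apply (𝕜 := 𝕜) v x
    rw [coe_coe] at hx
    rw [hx, inner_zero_right, map_zero, eq_comm,
      Finset.sum_eq_zero_iff_of_nonneg fun _ _ => by positivity] at h
    simpa using h j (Finset.mem_univ j)
  · intro hx
    simp [hx]

variable [CompleteSpace E]

lemma topologicalClosure_range_sum_rankOne_self (v : ι → E) :
    (LinearMap.range ((∑ j, rankOne 𝕜 (v j) (v j) : E →L[𝕜] E) : E →ₗ[𝕜] E)).topologicalClosure
      = Submodule.span 𝕜 (Set.range v) := by
  have hadj : adjoint (∑ j, rankOne 𝕜 (v j) (v j)) = ∑ j, rankOne 𝕜 (v j) (v j) := by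
    simp [map_sum]
  have := FiniteDimensional.span_of_finite 𝕜 (Set.finite_range v)
  rw [← Submodule.orthogonal_orthogonal_eq_closure, orthogonal_range, hadj,
    ker_sum_rankOne_self, Submodule.orthogonal_orthogonal]

lemma exists_eq_smul_rankOne_of_isSelfAdjoint {A : E →L[𝕜] E} (hA : IsSelfAdjoint A) {ξ : E}
    (hξ : ξ ≠ 0) (hrange : ∀ x, A x ∈ 𝕜 ∙ ξ) : ∃ c : 𝕜, A = c • rankOne 𝕜 ξ ξ := by
  obtain ⟨μ, hμ⟩ := Submodule.mem_span_singleton.mp (hrange ξ)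
  have hξ2 : (‖ξ‖ ^ 2 : 𝕜) ≠ 0 := by simpa using hξ
  refine ⟨starRingEnd 𝕜 μ / ‖ξ‖ ^ 2, ext fun x => ?_⟩
  obtain ⟨a, ha⟩ := Submodule.mem_span_singleton.mp (hrange x)
  have key : inner 𝕜 (A ξ) x = inner 𝕜 ξ (A x) := hA.isSymmetric ξ x
  rw [← hμ, ← ha, inner_smul_left, inner_smul_right, inner_self_eq_norm_sq_to_K] at key
  rw [← ha, smul_apply, rankOne_apply, smul_smul, div_mul_eq_mul_div, key,
    mul_div_cancel_right₀ _ hξ2]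

end RankOne

/-- Words of length `< n` in `d` letters, i.e. the monomials of degree `< n`. -/
abbrev ShortWord (d n : ℕ) : Type := Σ k : Fin n, (Fin (k : ℕ) → Fin d)

lemma forall_le_linearIndependent_shortWord_iff {R V : Type*} [Semiring R] [AddCommMonoid V]
    [Module R V] {d m : ℕ} (f : ∀ k : ℕ, (Fin k → Fin d) → V) :
    (∀ n ≤ m, LinearIndependent R fun w : ShortWord d n => f _ w.2) ↔
      LinearIndependent R fun w : ShortWord d m => f _ w.2 :=
  ⟨fun h => h m le_rfl, fun h _ hn =>
    h.comp _ <| (Fin.castLE_injective hn).sigma_map fun _ => Function.injective_id⟩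

lemma card_shortWord (d n : ℕ) :
    Fintype.card (ShortWord d n) = ∑ i ∈ Finset.range n, d ^ i := by
  simp [Fintype.card_sigma, Fin.sum_univ_eq_sum_range (fun i => d ^ i)]

section Defect

variable {H : Type*} [NormedAddCommGroup H] [InnerProductSpace ℂ H] [CompleteSpace H] {d : ℕ}
  (T : Fin d → H →L[ℂ] H)

noncomputable def psiMapₗ : (H →L[ℂ] H) →ₗ[ℂ] H →L[ℂ] H :=
  ∑ i, LinearMap.mulLeft ℂ (T i) ∘ₗ LinearMap.mulRight ℂ (adjoint (T i))

lemma coe_psiMapₗ : ⇑(psiMapₗ T) = psiMap T := by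
  ext X : 1
  simp [psiMapₗ, psiMap, LinearMap.sum_apply, mul_def]

lemma iterate_psiMap (n : ℕ) : (psiMap T)^[n] = ⇑(psiMapₗ T ^ n) := by
  rw [Module.End.coe_pow, coe_psiMapₗ]

lemma psiMap_rankOne (u : H) : psiMap T (rankOne ℂ u u) = ∑ i, rankOne ℂ (T i u) (T i u) := by
  simp [psiMap, comp_rankOne, rankOne_comp]

lemma wordOp_cons {k : ℕ} (i : Fin d) (w : Fin k → Fin d) :
    wordOp T (Fin.cons i w) = T i * wordOp T w := by
  simp [wordOp, List.ofFn_succ]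

lemma iterate_psiMap_rankOne (u : H) (k : ℕ) :
    (psiMap T)^[k] (rankOne ℂ u u) =
      ∑ w : Fin k → Fin d, rankOne ℂ (wordOp T w u) (wordOp T w u) := by
  induction k with
  | zero => simp [wordOp]
  | succ k ih =>
    rw [Function.iterate_succ_apply', ih, ← coe_psiMapₗ, map_sum, coe_psiMapₗ]
    simp only [psiMap_rankOne]
    rw [← (Fin.consEquiv fun _ => Fin d).sum_comp, Fintype.sum_prod_type, Finset.sum_comm]
    refine Finset.sum_congr rfl fun i _ => Finset.sum_congr rfl fun w _ => ?_
    rw [show (Fin.consEquiv fun _ => Fin d) (i, w) = Fin.cons i w from rfl, wordOp_cons,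
      mul_apply_eq_comp]

lemma one_sub_iterate_psiMap_one (n : ℕ) :
    1 - (psiMap T)^[n] 1 = ∑ k ∈ Finset.range n, (psiMap T)^[k] (1 - psiMap T 1) := by
  induction n with
  | zero => simp
  | succ n ih =>
    rw [Finset.sum_range_succ, ← ih, iterate_psiMap T n, map_sub, ← iterate_psiMap,
      ← Function.iterate_succ_apply]
    abel

lemma one_sub_iterate_psiMap_one_eq_smul_sum {c : ℂ} {ξ : H}
    (hc : 1 - psiMap T 1 = c • rankOne ℂ ξ ξ) (n : ℕ) :
    1 - (psiMap T)^[n] 1 =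
      c • ∑ w : ShortWord d n, rankOne ℂ (wordOp T w.2 ξ) (wordOp T w.2 ξ) := by
  rw [one_sub_iterate_psiMap_one, hc, Fintype.sum_sigma, Finset.smul_sum,
    ← Fin.sum_univ_eq_sum_range]
  refine Finset.sum_congr rfl fun k _ => ?_
  rw [iterate_psiMap, map_smul, ← iterate_psiMap, iterate_psiMap_rankOne]

lemma defectSpace_eq_span_wordOp {c : ℂ} (hc₀ : c ≠ 0) {ξ : H}
    (hc : 1 - psiMap T 1 = c • rankOne ℂ ξ ξ) (n : ℕ) :
    defectSpace T n = Submodule.span ℂ (Set.range fun w : ShortWord d n => wordOp T w.2 ξ) := by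
  rw [defectSpace, one_sub_iterate_psiMap_one_eq_smul_sum T hc, toLinearMap_smul,
    LinearMap.range_smul _ _ hc₀, topologicalClosure_range_sum_rankOne_self]

lemma exists_one_sub_psiMap_one_eq_smul_rankOne (hT : (1 - psiMap T 1).IsPositive) {ξ : H}
    (hξ : ξ ≠ 0) (hD : defectSpace T 1 = ℂ ∙ ξ) :
    ∃ c : ℂ, c ≠ 0 ∧ 1 - psiMap T 1 = c • rankOne ℂ ξ ξ := by
  have hrange (x : H) : (1 - psiMap T 1) x ∈ ℂ ∙ ξ := by
    rw [← hD, defectSpace, Function.iterate_one]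
    exact Submodule.le_topologicalClosure _ (LinearMap.mem_range_self _ x)
  obtain ⟨c, hc⟩ := exists_eq_smul_rankOne_of_isSelfAdjoint hT.isSelfAdjoint hξ hrange
  refine ⟨c, ?_, hc⟩
  rintro rfl
  rw [zero_smul] at hc
  exact hξ (by simpa [defectSpace, hc, eq_comm (a := ⊥)] using hD)

end Defect

/-- A noncommutative polynomial of degree `< m` is encoded by its coefficients `c` on words of
length `< m`. -/
theorem stmt14_general {H : Type*} [NormedAddCommGroup H] [InnerProductSpace ℂ H] [CompleteSpace H]
    {d : ℕ} (T : Fin d → H →L[ℂ] H)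
    (hT : (1 - psiMap T 1).IsPositive)
    (ξ : H) (hξ : ξ ≠ 0) (hD : defectSpace T 1 = Submodule.span ℂ {ξ})
    (m : ℕ) :
    (∀ n : ℕ, n ≤ m →
      Module.rank ℂ (defectSpace T n) = ∑ i ∈ Finset.range n, (d : Cardinal) ^ i)
      ↔
    (∀ c : (Σ k : Fin m, (Fin (k : ℕ) → Fin d)) → ℂ,
      (∑ w : (Σ k : Fin m, (Fin (k : ℕ) → Fin d)), c w • wordOp T w.2 ξ) = 0 → c = 0) := by
  obtain ⟨c, hc₀, hc⟩ := exists_one_sub_psiMap_one_eq_smul_rankOne T hT hξ hD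
  have hrank (n : ℕ) :
      Module.rank ℂ (defectSpace T n) = ∑ i ∈ Finset.range n, (d : Cardinal) ^ i ↔
        LinearIndependent ℂ fun w : ShortWord d n => wordOp T w.2 ξ := by
    rw [defectSpace_eq_span_wordOp T hc₀ hc, ← rank_span_range_eq_card_iff, card_shortWord]
    norm_cast
  simp only [hrank, ← Fintype.linearIndependent_iff, funext_iff, Pi.zero_apply]
  exact forall_le_linearIndependent_shortWord_iff fun _ w => wordOp T w ξ

/-- With `D_1 = ℂξ`, the defect dimensions attain the maximal value
`1 + d + ⋯ + d^{n-1}` for all `n ≤ m` iff no nonzero noncommutative polynomial of degree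
less than `m` annihilates `ξ`; a polynomial of degree `< m` is encoded by its coefficient
function `c` on words of length `< m`. -/
theorem stmt14 {H : Type*} [NormedAddCommGroup H] [InnerProductSpace ℂ H] [CompleteSpace H]
    {d : ℕ} (T : Fin d → H →L[ℂ] H)
    (hT : (1 - psiMap T 1).IsPositive)
    (hinf : ¬ FiniteDimensional ℂ H)
    (ξ : H) (hξ : ξ ≠ 0) (hD : defectSpace T 1 = Submodule.span ℂ {ξ})
    (m : ℕ) :
    (∀ n : ℕ, n ≤ m →
      Module.rank ℂ (defectSpace T n) = ∑ i ∈ Finset.range n, (d : Cardinal) ^ i)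
      ↔
    (∀ c : (Σ k : Fin m, (Fin (k : ℕ) → Fin d)) → ℂ,
      (∑ w : (Σ k : Fin m, (Fin (k : ℕ) → Fin d)), c w • wordOp T w.2 ξ) = 0 → c = 0) :=
  stmt14_general T hT ξ hξ hD m
end

section
/- Let T be a pure contraction on a Hilbert space H with Δ_T = 1. Then Δ_T^n = n for all 0 ≤ n ≤ dim H; that is, the defect dimensions achieve the maximal possible value (T is maximal). -/
/-!
Since `D = 1 - T T†` is self-adjoint with one-dimensional range, `D = d • |v⟩⟨v|` with `d ≠ 0`, and
telescoping gives `1 - Tⁿ T†ⁿ = ∑_{k<n} Tᵏ D T†ᵏ = d • ∑_{k<n} |Tᵏ v⟩⟨Tᵏ v|`. The kernel of this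
operator is the orthogonal complement of `span {Tᵏ v | k < n}`, so the closure of its range is that
span, and it remains to show that `v, T v, …, Tⁿ⁻¹ v` are linearly independent when `n ≤ dim H`.

Purity makes the whole orbit `(Tᵏ v)ₖ` total: if `x ⊥ Tᵏ v` for every `k`, then `D` kills every
`T†ᵏ x`, so `T T†` fixes it and `‖T†ᵏ x‖` is nondecreasing (as `‖T‖ ≤ 1`) while tending to `0`.
If `Tᵐ v` lay in the span of `v, …, Tᵐ⁻¹ v`, that span would be `T`-invariant, hence contain the
orbit, hence be dense and (being finite-dimensional) equal to `H`, giving `dim H ≤ m`.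
-/

open ContinuousLinearMap Filter Topology InnerProductSpace Submodule Set

theorem one_sub_pow_mul_pow_eq_sum {R : Type*} [Ring R] (a b : R) (n : ℕ) :
    1 - a ^ n * b ^ n = ∑ k ∈ Finset.range n, a ^ k * (1 - a * b) * b ^ k := by
  induction n with
  | zero => simp
  | succ n ih =>
    rw [Finset.sum_range_succ, ← ih, pow_succ a n, pow_succ' b n]
    noncomm_ring

theorem Module.End.pow_apply_mem_span_of_pow_apply_mem_span {R M : Type*} [Semiring R]
    [AddCommMonoid M] [Module R M] (f : Module.End R M) (v : M) {m : ℕ}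
    (hm : (f ^ m) v ∈ span R (range fun k : Fin m => (f ^ (k : ℕ)) v)) (j : ℕ) :
    (f ^ j) v ∈ span R (range fun k : Fin m => (f ^ (k : ℕ)) v) := by
  set W := span R (range fun k : Fin m => (f ^ (k : ℕ)) v)
  have hfW : W ≤ W.comap f := by
    refine span_le.mpr ?_
    rintro _ ⟨k, rfl⟩
    rw [SetLike.mem_coe, Submodule.mem_comap, ← Module.End.mul_apply, ← pow_succ']
    rcases (show (k : ℕ) + 1 ≤ m from k.isLt).eq_or_lt with hk | hk
    · rwa [hk]
    · exact subset_span ⟨⟨k + 1, hk⟩, rfl⟩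
  induction j with
  | zero =>
    rcases Nat.eq_zero_or_pos m with rfl | hm0
    · exact hm
    · exact subset_span ⟨⟨0, hm0⟩, rfl⟩
  | succ j ih => rw [pow_succ', Module.End.mul_apply]; exact hfW ih

section InnerProductSpace

variable {𝕜 E : Type*} [RCLike 𝕜] [NormedAddCommGroup E] [InnerProductSpace 𝕜 E]

theorem Submodule.mem_orthogonal_span_iff {s : Set E} {x : E} :
    x ∈ (span 𝕜 s)ᗮ ↔ ∀ u ∈ s, inner 𝕜 u x = 0 := by
  rw [← span_singleton_le_iff_mem, ← isOrtho_iff_le, isOrtho_comm, isOrtho_span]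
  simp

theorem ker_sum_rankOne_self_s17 {ι : Type*} [Fintype ι] (g : ι → E) :
    (∑ i, rankOne 𝕜 (g i) (g i)).ker = (span 𝕜 (range g))ᗮ := by
  ext x
  have hsum : ∑ i, ‖inner 𝕜 (g i) x‖ ^ 2 =
      RCLike.re (inner 𝕜 x ((∑ i, rankOne 𝕜 (g i) (g i)) x)) := by
    simp only [sum_apply, rankOne_apply, inner_sum, inner_smul_right, map_sum]
    refine Finset.sum_congr rfl fun i _ => ?_
    rw [← inner_conj_symm x (g i), RCLike.mul_conj, ← RCLike.ofReal_pow, RCLike.ofReal_re]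
  rw [LinearMap.mem_ker, coe_coe, mem_orthogonal_span_iff, forall_mem_range]
  constructor
  · intro hx i
    rw [hx, inner_zero_right, map_zero] at hsum
    simpa using (Finset.sum_eq_zero_iff_of_nonneg fun i _ => sq_nonneg _).mp hsum i
      (Finset.mem_univ i)
  · intro hx
    simp [sum_apply, hx]

theorem rank_le_of_pow_apply_mem_span {T : E →L[𝕜] E} {v : E}
    (hdense : ∀ x, (∀ k, inner 𝕜 ((T ^ k) v) x = 0) → x = 0) {m : ℕ}
    (hm : (T ^ m) v ∈ span 𝕜 (range fun k : Fin m => (T ^ (k : ℕ)) v)) :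
    Module.rank 𝕜 E ≤ m := by
  set W := span 𝕜 (range fun k : Fin m => (T ^ (k : ℕ)) v)
  have hW : ∀ j, (T ^ j) v ∈ W := by
    simp only [W, ← coe_coe, toLinearMap_pow] at hm ⊢
    exact Module.End.pow_apply_mem_span_of_pow_apply_mem_span _ v hm
  have : FiniteDimensional 𝕜 W := .span_of_finite 𝕜 (finite_range _)
  have hWtop : W = ⊤ := by
    refine orthogonal_eq_bot_iff.mp (eq_bot_iff.mpr fun x hx => ?_)
    exact hdense x fun k => (mem_orthogonal W x).mp hx _ (hW k)
  rw [← rank_top, ← hWtop]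
  refine (rank_span_le _).trans ?_
  simpa using Cardinal.mk_range_le_lift (f := fun k : Fin m => (T ^ (k : ℕ)) v)

theorem linearIndependent_pow_apply_of_le_rank {T : E →L[𝕜] E} {v : E}
    (hdense : ∀ x, (∀ k, inner 𝕜 ((T ^ k) v) x = 0) → x = 0) :
    ∀ m : ℕ, (m : Cardinal) ≤ Module.rank 𝕜 E →
      LinearIndependent 𝕜 (fun k : Fin m => (T ^ (k : ℕ)) v)
  | 0, _ => linearIndependent_empty_type
  | m + 1, hm => by
    have hsnoc : (fun k : Fin (m + 1) => (T ^ (k : ℕ)) v) =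
        Fin.snoc (fun k : Fin m => (T ^ (k : ℕ)) v) ((T ^ m) v) := by
      ext k
      induction k using Fin.lastCases <;> simp
    rw [hsnoc, linearIndependent_finSnoc]
    refine ⟨linearIndependent_pow_apply_of_le_rank hdense m ?_, fun hmem => ?_⟩
    · exact le_trans (by norm_cast; omega) hm
    · exact m.lt_succ_self.not_ge
        (by exact_mod_cast hm.trans (rank_le_of_pow_apply_mem_span hdense hmem))

variable [CompleteSpace E]

theorem ContinuousLinearMap.adjoint_pow (T : E →L[𝕜] E) (n : ℕ) :
    adjoint (T ^ n) = adjoint T ^ n := by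
  simp only [← star_eq_adjoint, star_pow]

theorem ContinuousLinearMap.isSelfAdjoint_one_sub_mul_adjoint (T : E →L[𝕜] E) :
    IsSelfAdjoint (1 - T * adjoint T) :=
  (IsSelfAdjoint.one _).sub (by simpa only [star_eq_adjoint] using IsSelfAdjoint.mul_star_self T)

theorem ContinuousLinearMap.mul_rankOne_mul_adjoint (S : E →L[𝕜] E) (v : E) :
    S * rankOne 𝕜 v v * adjoint S = rankOne 𝕜 (S v) (S v) := by
  rw [mul_def, mul_def, comp_rankOne, rankOne_comp, adjoint_adjoint]

theorem one_sub_pow_mul_adjoint_pow_eq_sum {T : E →L[𝕜] E} {d : 𝕜} {v : E}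
    (hD : 1 - T * adjoint T = d • rankOne 𝕜 v v) (n : ℕ) :
    1 - T ^ n * adjoint (T ^ n) =
      d • ∑ k : Fin n, rankOne 𝕜 ((T ^ (k : ℕ)) v) ((T ^ (k : ℕ)) v) := by
  rw [adjoint_pow, one_sub_pow_mul_pow_eq_sum, hD, Finset.smul_sum,
    Fin.sum_univ_eq_sum_range (fun k => d • rankOne 𝕜 ((T ^ k) v) ((T ^ k) v))]
  refine Finset.sum_congr rfl fun k _ => ?_
  rw [mul_smul_comm, smul_mul_assoc, ← adjoint_pow, mul_rankOne_mul_adjoint]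

theorem IsSelfAdjoint.topologicalClosure_range {A : E →L[𝕜] E} (hA : IsSelfAdjoint A) :
    A.range.topologicalClosure = A.kerᗮ := by
  rw [orthogonal_ker, hA.adjoint_eq]

theorem IsSelfAdjoint.exists_eq_smul_rankOne_of_forall_mem_span_singleton {A : E →L[𝕜] E}
    (hA : IsSelfAdjoint A) {v : E} (hv : ∀ x, A x ∈ 𝕜 ∙ v) :
    ∃ d : 𝕜, A = d • rankOne 𝕜 v v := by
  rcases eq_or_ne v 0 with rfl | hv0
  · exact ⟨0, ext fun x => by simpa using hv x⟩
  obtain ⟨c₀, hc₀⟩ := mem_span_singleton.mp (hv v)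
  refine ⟨starRingEnd 𝕜 c₀ / inner 𝕜 v v, ext fun x => ?_⟩
  obtain ⟨c, hc⟩ := mem_span_singleton.mp (hv x)
  have hvv : inner 𝕜 v v ≠ (0 : 𝕜) := inner_self_ne_zero.mpr hv0
  have key : c * inner 𝕜 v v = starRingEnd 𝕜 c₀ * inner 𝕜 v x := by
    rw [← inner_smul_right, hc, ← adjoint_inner_left, hA.adjoint_eq, ← hc₀, inner_smul_left]
  rw [← hc, smul_apply, rankOne_apply, smul_smul]
  congr 1
  field_simp
  linear_combination key

theorem IsSelfAdjoint.exists_eq_smul_rankOne {A : E →L[𝕜] E} (hA : IsSelfAdjoint A)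
    (hrank : Module.rank 𝕜 A.range.topologicalClosure = 1) :
    ∃ (d : 𝕜) (v : E), d ≠ 0 ∧ A = d • rankOne 𝕜 v v := by
  obtain ⟨v, -, hv⟩ := rank_eq_one_iff.mp hrank
  have hAv : ∀ x, A x ∈ 𝕜 ∙ (v : E) := fun x => by
    obtain ⟨c, hc⟩ := hv ⟨A x, le_topologicalClosure _ (LinearMap.mem_range_self _ x)⟩
    exact mem_span_singleton.mpr ⟨c, congrArg Subtype.val hc⟩
  obtain ⟨d, hd⟩ := hA.exists_eq_smul_rankOne_of_forall_mem_span_singleton hAv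
  refine ⟨d, v, fun hd0 => ?_, hd⟩
  rw [hd, hd0, zero_smul, toLinearMap_zero, LinearMap.range_zero,
    (closed_of_finiteDimensional ⊥).submodule_topologicalClosure_eq, rank_bot] at hrank
  exact zero_ne_one hrank

theorem eq_zero_of_forall_inner_pow_apply_eq_zero {T : E →L[𝕜] E} (hT : ‖T‖ ≤ 1)
    (hpure : ∀ x, Tendsto (fun n => (adjoint T ^ n) x) atTop (𝓝 0)) {v : E}
    (hker : ∀ y, inner 𝕜 v y = 0 → T (adjoint T y) = y) {x : E}
    (hx : ∀ k, inner 𝕜 ((T ^ k) v) x = 0) : x = 0 := by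
  have hmono : Monotone fun k => ‖(adjoint T ^ k) x‖ := monotone_nat_of_le_succ fun k => by
    have hvk : inner 𝕜 v ((adjoint T ^ k) x) = 0 := by
      rw [← adjoint_pow, adjoint_inner_right, hx]
    calc ‖(adjoint T ^ k) x‖ = ‖T (adjoint T ((adjoint T ^ k) x))‖ := by rw [hker _ hvk]
      _ ≤ 1 * ‖adjoint T ((adjoint T ^ k) x)‖ := T.le_of_opNorm_le hT _
      _ = ‖(adjoint T ^ (k + 1)) x‖ := by rw [one_mul, pow_succ']; rfl
  have hle : ‖x‖ ≤ 0 := ge_of_tendsto' (by simpa using (hpure x).norm) fun k => by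
    simpa using hmono (Nat.zero_le k)
  exact norm_le_zero_iff.mp hle

end InnerProductSpace

/-- Let `T` be a single pure contraction (`T*ⁿ → 0` strongly) with `Δ_T = 1`. Then
`Δ_T^n = n` for all `0 ≤ n ≤ dim H`: the defect dimensions are maximal. -/
theorem stmt17 {H : Type*} [NormedAddCommGroup H] [InnerProductSpace ℂ H] [CompleteSpace H]
    (T : H →L[ℂ] H) (hT : ‖T‖ ≤ 1)
    (hpure : ∀ x : H,
      Filter.Tendsto (fun n : ℕ => ((adjoint T) ^ n) x) Filter.atTop (nhds 0))
    (hdef : Module.rank ℂ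
      ((LinearMap.range ((1 - T * adjoint T : H →L[ℂ] H) : H →ₗ[ℂ] H)).topologicalClosure) = 1) :
    ∀ n : ℕ, (n : Cardinal) ≤ Module.rank ℂ H →
      Module.rank ℂ
        ((LinearMap.range ((1 - T ^ n * adjoint (T ^ n) : H →L[ℂ] H) : H →ₗ[ℂ] H)).topologicalClosure) =
        n := by
  intro n hn
  obtain ⟨d, v, hd, hD⟩ := (isSelfAdjoint_one_sub_mul_adjoint T).exists_eq_smul_rankOne hdef
  have hker : ∀ y, inner ℂ v y = 0 → T (adjoint T y) = y := fun y hy => by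
    refine (sub_eq_zero.mp ?_).symm
    simpa [hy] using congrArg (· y) hD
  have hli := linearIndependent_pow_apply_of_le_rank
    (fun x => eq_zero_of_forall_inner_pow_apply_eq_zero hT hpure hker) n hn
  have : FiniteDimensional ℂ (span ℂ (range fun k : Fin n => (T ^ (k : ℕ)) v)) :=
    .span_of_finite ℂ (finite_range _)
  rw [(isSelfAdjoint_one_sub_mul_adjoint (T ^ n)).topologicalClosure_range,
    one_sub_pow_mul_adjoint_pow_eq_sum hD, toLinearMap_smul, LinearMap.ker_smul _ _ hd,
    ker_sum_rankOne_self_s17, orthogonal_orthogonal, ← Module.finrank_eq_rank,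
    finrank_span_eq_card hli, Fintype.card_fin]
end
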